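/- Makespan scheduling theorem: let B, D be n×n max-plus matrices, C column-regular, R = B ⊕ DC with Tr(R) ≤ 0; let g be a vector, f and h regular vectors, s⁻ = f⁻C ⊕ h⁻ with s⁻R*g ≤ 0. Then the minimum of x⁻ 1 1ᵀ C x (= max_i (Cx)_i − min_i x_i) over regular x satisfying Bx ≤ x, D(Cx) ≤ x, g ≤ x ≤ h, Cx ≤ f equals θ = ⊕_{0≤i+j≤n−2} ‖s⁻R^i‖·‖CR^j g‖ ⊕ ‖CR*‖ (tropical products). -/

import Mathlib

noncomputable section
abbrev T := WithBot ℝ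

/-- Tropical (max-plus) sum over a finite family. -/
def tSum {n : ℕ} (f : Fin n → T) : T := Finset.univ.sup f

/-- Tropical matrix product. -/
def tMulM {m n p : ℕ} (A : Matrix (Fin m) (Fin n) T) (B : Matrix (Fin n) (Fin p) T) :
    Matrix (Fin m) (Fin p) T := fun i j => tSum fun k => A i k + B k j

/-- Tropical identity matrix. -/
def tId (n : ℕ) : Matrix (Fin n) (Fin n) T := fun i j => if i = j then (0 : T) else ⊥

/-- Tropical matrix power. -/
def tpow {n : ℕ} (A : Matrix (Fin n) (Fin n) T) : ℕ → Matrix (Fin n) (Fin n) T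
  | 0 => tId n
  | k + 1 => tMulM (tpow A k) A

/-- Tropical trace. -/
def tTr {n : ℕ} (A : Matrix (Fin n) (Fin n) T) : T := tSum fun k => A k k

/-- Multiplicative conjugate of a scalar: negation on finite entries, -∞ ↦ -∞. -/
def tconj (t : T) : T := WithBot.map (fun a : ℝ => -a) t

/-- Kleene star (for an n×n matrix): I ⊕ A ⊕ ⋯ ⊕ A^(n-1). -/
def kstar {n : ℕ} (A : Matrix (Fin n) (Fin n) T) : Matrix (Fin n) (Fin n) T :=
  fun i j => tSum fun k : Fin n => tpow A (k : ℕ) i j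

/-- Tr(A) = tr A ⊕ ⋯ ⊕ tr Aⁿ. -/
def TrB {n : ℕ} (A : Matrix (Fin n) (Fin n) T) : T := tSum fun k : Fin n => tTr (tpow A ((k : ℕ) + 1))

/-- Tropical root: t^{1/k} = t/k. -/
def tdiv (t : T) (k : ℕ) : T := WithBot.map (fun a : ℝ => a / k) t

/-- Row vector × matrix × column vector. -/
def vMv {n : ℕ} (u : Fin n → T) (A : Matrix (Fin n) (Fin n) T) (v : Fin n → T) : T :=
  tSum fun i => u i + tSum fun j => A i j + v j

/-- Pairs (i,j) of exponents with 0 ≤ i + j ≤ n − 2. -/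
def pairSet (n : ℕ) : Finset (ℕ × ℕ) :=
  (Finset.range n ×ˢ Finset.range n).filter (fun ij => ij.1 + ij.2 + 2 ≤ n)

/-!
A feasible `x` satisfies `R x ≤ x`, hence `R^k x ≤ x` and `R* x ≤ x`; combined with `g ≤ x` and
`s⁻ x ≤ 0` this bounds every term of `θ` by the makespan `‖C x‖ - min x`.

Conversely, put `p = θ⁻ 1ᵀ C` and `G = R ⊕ 1 p`. Every `p R^m` is nonpositive, because
`R^m ≤ R*` (as `Tr(R) ≤ 0`) and `‖C R*‖ ≤ θ`, so `G^k` is dominated by `R^k` and the rank-one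
products `R^i 1 p R^j` with `i + j < k`. The diagonal of such a product is bounded by
`p R^(i+j)`, which gives `Tr(G) ≤ 0`; and `s⁻ R^i 1 p R^j g = θ⁻ ‖s⁻ R^i‖ ‖C R^j g‖` is exactly
a term of `θ`, which gives `s⁻ G* g ≤ 0`. The vector `x = G* (g ⊕ ε 1)`, for `ε` small enough,
then satisfies `G x ≤ x`: that is `R x ≤ x` together with `θ⁻ ‖C x‖ ≤ x_i` for every `i`, so its
makespan is at most `θ`.
-/

open Finset

def tMulV {m n : ℕ} (A : Matrix (Fin m) (Fin n) T) (x : Fin n → T) : Fin m → T :=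
  fun i => tSum fun j => A i j + x j

def tVMul {m n : ℕ} (u : Fin m → T) (A : Matrix (Fin m) (Fin n) T) : Fin n → T :=
  fun j => tSum fun i => u i + A i j

def tDot {n : ℕ} (u v : Fin n → T) : T := tSum fun i => u i + v i

section TSum

variable {m n : ℕ}

lemma le_tSum (f : Fin n → T) (i : Fin n) : f i ≤ tSum f := le_sup (mem_univ i)

lemma tSum_le_iff {f : Fin n → T} {X : T} : tSum f ≤ X ↔ ∀ i, f i ≤ X := by
  simp [tSum]

lemma tSum_mono {f g : Fin n → T} (h : f ≤ g) : tSum f ≤ tSum g :=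
  sup_mono_fun fun i _ => h i

lemma tSum_add (f : Fin n → T) (c : T) : tSum f + c = tSum fun i => f i + c :=
  apply_sup_eq_sup_comp (· + c) (fun x y => (max_add_add_right x y c).symm) (WithBot.bot_add c)

lemma add_tSum (c : T) (f : Fin n → T) : c + tSum f = tSum fun i => c + f i :=
  apply_sup_eq_sup_comp (c + ·) (fun x y => (max_add_add_left c x y).symm) (WithBot.add_bot c)

lemma tSum_comm (f : Fin m → Fin n → T) :
    (tSum fun i => tSum fun j => f i j) = tSum fun j => tSum fun i => f i j :=
  Finset.sup_comm _ _ _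

lemma tSum_max (f g : Fin n → T) :
    (tSum fun i => max (f i) (g i)) = max (tSum f) (tSum g) :=
  Finset.sup_sup

lemma sup_add_const_le {ι : Type*} {s : Finset ι} {F : ι → T} {x M : T}
    (h : ∀ i ∈ s, F i + x ≤ M) : s.sup F + x ≤ M := by
  rw [apply_sup_eq_sup_comp (· + x) (fun y z => (max_add_add_right y z x).symm)
    (WithBot.bot_add x)]
  exact Finset.sup_le h

end TSum

lemma le_add_coe_neg_iff {a X : T} {r : ℝ} : a ≤ X + ((-r : ℝ) : T) ↔ a + r ≤ X := by
  induction a using WithBot.recBotCoe with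
  | bot => simp
  | coe a =>
    induction X using WithBot.recBotCoe with
    | bot => simp [← WithBot.coe_add]
    | coe X =>
      norm_cast
      constructor <;> intro h <;> linarith

lemma coe_neg_add_nonpos_iff {a : T} {r : ℝ} : ((-r : ℝ) : T) + a ≤ 0 ↔ a ≤ r := by
  induction a using WithBot.recBotCoe with
  | bot => simp
  | coe a =>
    norm_cast
    constructor <;> intro h <;> linarith

lemma tconj_add_nonpos {θ a : T} (h : a ≤ θ) : tconj θ + a ≤ 0 := by
  induction θ using WithBot.recBotCoe with
  | bot => simp [tconj]
  | coe t => exact coe_neg_add_nonpos_iff.2 h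

lemma add_coe_neg_le_of_tconj_add_le {θ a : T} {r : ℝ} (hθ : θ ≠ ⊥) (h : tconj θ + a ≤ r) :
    a + ((-r : ℝ) : T) ≤ θ := by
  obtain ⟨t, rfl⟩ := WithBot.ne_bot_iff_exists.1 hθ
  induction a using WithBot.recBotCoe with
  | bot => simp
  | coe a =>
    rw [tconj, WithBot.map_coe] at h
    norm_cast at h ⊢
    linarith

lemma exists_add_coe_nonpos (S : T) : ∃ ε : ℝ, S + ε ≤ 0 := by
  induction S using WithBot.recBotCoe with
  | bot => exact ⟨0, by simp⟩
  | coe s => exact ⟨-s, by norm_cast; simp⟩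

section Products

variable {l m n : ℕ}

lemma tMulV_le_iff {A : Matrix (Fin m) (Fin n) T} {x : Fin n → T} {y : Fin m → T} :
    tMulV A x ≤ y ↔ ∀ i j, A i j + x j ≤ y i := by
  simp only [Pi.le_def, tMulV, tSum_le_iff]

lemma vMv_le_iff {u : Fin n → T} {A : Matrix (Fin n) (Fin n) T} {v : Fin n → T} {X : T} :
    vMv u A v ≤ X ↔ ∀ i j, u i + A i j + v j ≤ X := by
  simp only [vMv, add_tSum, tSum_le_iff, add_assoc]

lemma le_vMv (u : Fin n → T) (A : Matrix (Fin n) (Fin n) T) (v : Fin n → T) (i j : Fin n) :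
    u i + A i j + v j ≤ vMv u A v :=
  vMv_le_iff.1 le_rfl i j

lemma tMulV_mono (A : Matrix (Fin m) (Fin n) T) {x y : Fin n → T} (h : x ≤ y) :
    tMulV A x ≤ tMulV A y :=
  fun _ => tSum_mono fun j => add_le_add_right (h j) _

lemma tMulV_mono_left {A B : Matrix (Fin m) (Fin n) T} (h : ∀ i j, A i j ≤ B i j)
    (x : Fin n → T) : tMulV A x ≤ tMulV B x :=
  fun i => tSum_mono fun j => add_le_add_left (h i j) _

lemma tMulV_max (A B : Matrix (Fin m) (Fin n) T) (x : Fin n → T) :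
    tMulV (fun i j => max (A i j) (B i j)) x = fun i => max (tMulV A x i) (tMulV B x i) := by
  ext i
  simp only [tMulV, ← max_add_add_right, tSum_max]

lemma tMulM_mono_right (A : Matrix (Fin l) (Fin m) T) {B B' : Matrix (Fin m) (Fin n) T}
    (h : ∀ i j, B i j ≤ B' i j) (i : Fin l) (j : Fin n) : tMulM A B i j ≤ tMulM A B' i j :=
  tSum_mono fun k => add_le_add_right (h k j) _

lemma tMulM_assoc {q : ℕ} (A : Matrix (Fin l) (Fin m) T) (B : Matrix (Fin m) (Fin n) T)
    (C : Matrix (Fin n) (Fin q) T) : tMulM (tMulM A B) C = tMulM A (tMulM B C) := by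
  ext i j
  simp only [tMulM, tSum_add, add_tSum, add_assoc]
  exact tSum_comm _

lemma tMulV_tMulM (A : Matrix (Fin l) (Fin m) T) (B : Matrix (Fin m) (Fin n) T)
    (x : Fin n → T) : tMulV (tMulM A B) x = tMulV A (tMulV B x) := by
  ext i
  simp only [tMulV, tMulM, tSum_add, add_tSum, add_assoc]
  exact tSum_comm _

lemma tVMul_tMulM (u : Fin l → T) (A : Matrix (Fin l) (Fin m) T) (B : Matrix (Fin m) (Fin n) T) :
    tVMul u (tMulM A B) = tVMul (tVMul u A) B := by
  ext j
  simp only [tVMul, tMulM, tSum_add, add_tSum, add_assoc]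
  exact tSum_comm _

lemma tDot_tMulV (u : Fin m → T) (A : Matrix (Fin m) (Fin n) T) (x : Fin n → T) :
    tDot u (tMulV A x) = tDot (tVMul u A) x := by
  simp only [tDot, tMulV, tVMul, tSum_add, add_tSum, add_assoc]
  exact tSum_comm _

lemma tDot_tVMul_const (c : T) (A : Matrix (Fin m) (Fin n) T) (v : Fin n → T) :
    tDot (tVMul (fun _ => c) A) v = c + tSum (tMulV A v) := by
  rw [← tDot_tMulV, tDot, add_tSum]

lemma tSum_add_le_tSum_tVMul (p : Fin m → T) (A : Matrix (Fin m) (Fin n) T) (a : Fin m) :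
    tSum (A a) + p a ≤ tSum (tVMul p A) := by
  rw [tSum_add, tSum_le_iff]
  intro c
  rw [add_comm]
  exact (le_tSum (fun i => p i + A i c) a).trans (le_tSum (tVMul p A) c)

lemma tId_apply_self (i : Fin n) : tId n i i = 0 := if_pos rfl

lemma tId_apply_of_ne {i j : Fin n} (h : i ≠ j) : tId n i j = ⊥ := if_neg h

lemma tId_symm (i j : Fin n) : tId n i j = tId n j i := by
  simp only [tId, eq_comm]

lemma tSum_add_tId (f : Fin n → T) (j : Fin n) : (tSum fun k => f k + tId n k j) = f j := by
  refine le_antisymm (tSum_le_iff.2 fun k => ?_) ?_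
  · rcases eq_or_ne k j with rfl | hkj
    · rw [tId_apply_self, add_zero]
    · rw [tId_apply_of_ne hkj, WithBot.add_bot]; exact bot_le
  · calc f j = f j + tId n j j := by rw [tId_apply_self, add_zero]
      _ ≤ _ := le_tSum (fun k => f k + tId n k j) j

lemma tSum_tId_add (f : Fin n → T) (i : Fin n) : (tSum fun k => tId n i k + f k) = f i := by
  rw [← tSum_add_tId f i]
  congr 1
  funext k
  rw [add_comm, tId_symm]

lemma tMulM_tId (A : Matrix (Fin m) (Fin n) T) : tMulM A (tId n) = A := by
  ext i j; exact tSum_add_tId (A i) j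

lemma tId_tMulM (A : Matrix (Fin m) (Fin n) T) : tMulM (tId m) A = A := by
  ext i j; exact tSum_tId_add (A · j) i

lemma tMulV_tId (x : Fin n → T) : tMulV (tId n) x = x := by
  ext i; exact tSum_tId_add x i

lemma tVMul_tId (u : Fin n → T) : tVMul u (tId n) = u := by
  ext j; exact tSum_add_tId u j

end Products

section Powers

variable {n : ℕ} (A : Matrix (Fin n) (Fin n) T)

lemma tpow_add (a b : ℕ) : tpow A (a + b) = tMulM (tpow A a) (tpow A b) := by
  induction b with
  | zero => exact (tMulM_tId _).symm
  | succ b ih => rw [← add_assoc, tpow, ih, tMulM_assoc]; rfl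

lemma tpow_succ' (k : ℕ) : tpow A (k + 1) = tMulM A (tpow A k) := by
  rw [add_comm, tpow_add]
  congr
  exact tId_tMulM A

lemma tMulV_tpow_le {x : Fin n → T} (h : tMulV A x ≤ x) (k : ℕ) : tMulV (tpow A k) x ≤ x := by
  induction k with
  | zero => rw [tpow, tMulV_tId]
  | succ k ih =>
    rw [tpow, tMulV_tMulM]
    exact (tMulV_mono _ h).trans ih

end Powers

section KleeneStar

variable {n : ℕ} (A : Matrix (Fin n) (Fin n) T)

lemma tpow_le_kstar_of_lt {k : ℕ} (hk : k < n) (i j : Fin n) : tpow A k i j ≤ kstar A i j :=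
  le_tSum (fun c : Fin n => tpow A c i j) ⟨k, hk⟩

lemma le_tMulV_kstar (u : Fin n → T) : u ≤ tMulV (kstar A) u := fun i =>
  calc u i = tpow A 0 i i + u i := by rw [tpow, tId_apply_self, zero_add]
    _ ≤ kstar A i i + u i := add_le_add_left (tpow_le_kstar_of_lt A i.pos i i) _
    _ ≤ tMulV (kstar A) u i := le_tSum (fun j => kstar A i j + u j) i

lemma tMulV_kstar_le {x : Fin n → T} (h : tMulV A x ≤ x) : tMulV (kstar A) x ≤ x := by
  refine tMulV_le_iff.2 fun i j => ?_
  rw [kstar, tSum_add, tSum_le_iff]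
  exact fun k => tMulV_le_iff.1 (tMulV_tpow_le A h k) i j

lemma tpow_apply_self_nonpos (h : TrB A ≤ 0) {c : ℕ} (hc1 : 1 ≤ c) (hcn : c ≤ n) (i : Fin n) :
    tpow A c i i ≤ 0 := by
  obtain ⟨k, rfl⟩ := Nat.exists_eq_add_of_le' hc1
  exact (le_tSum (fun j => tpow A (k + 1) j j) i).trans
    ((le_tSum (fun k : Fin n => tTr (tpow A (k + 1))) ⟨k, hcn⟩).trans h)

lemma exists_walk_of_tpow_ne_bot (m : ℕ) (i j : Fin n) (h : tpow A m i j ≠ ⊥) :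
    ∃ w : ℕ → Fin n, w 0 = i ∧ w m = j ∧
      tpow A m i j = ∑ t ∈ range m, A (w t) (w (t + 1)) := by
  induction m generalizing j with
  | zero =>
    have hij : i = j := by_contra fun hij => h (tId_apply_of_ne hij)
    exact ⟨fun _ => i, rfl, hij, by rw [← hij]; exact tId_apply_self i⟩
  | succ m ih =>
    have : Nonempty (Fin n) := ⟨i⟩
    obtain ⟨k, -, hk⟩ := exists_mem_eq_sup univ univ_nonempty fun k => tpow A m i k + A k j
    rw [tpow, tMulM, tSum, hk] at h ⊢
    obtain ⟨w, hw0, hwm, hw⟩ := ih k (WithBot.add_ne_bot.1 h).1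
    refine ⟨Function.update w (m + 1) j, ?_, by simp, ?_⟩
    · rw [Function.update_of_ne (by omega), hw0]
    · rw [sum_range_succ, Function.update_self, Function.update_of_ne (by omega), hwm, hw]
      congr 1
      refine sum_congr rfl fun t ht => ?_
      rw [mem_range] at ht
      rw [Function.update_of_ne (by omega), Function.update_of_ne (by omega)]

lemma sum_Ico_le_tpow (w : ℕ → Fin n) {a b : ℕ} (hab : a ≤ b) :
    ∑ t ∈ Ico a b, A (w t) (w (t + 1)) ≤ tpow A (b - a) (w a) (w b) := by
  induction b, hab using Nat.le_induction with
  | base => simp [tpow, tId_apply_self]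
  | succ b hab ih =>
    rw [sum_Ico_succ_top hab, Nat.sub_add_comm hab, tpow]
    exact (add_le_add_left ih _).trans
      (le_tSum (fun k => tpow A (b - a) (w a) k + A k (w (b + 1))) (w b))

-- A walk of length `n` revisits a vertex; the closed subwalk in between has weight `≤ 0` because
-- `TrB A ≤ 0`, and cutting it out leaves a walk of length `< n`.
lemma tpow_dim_le_kstar (h : TrB A ≤ 0) (i j : Fin n) : tpow A n i j ≤ kstar A i j := by
  by_cases hbot : tpow A n i j = ⊥
  · rw [hbot]; exact bot_le
  obtain ⟨w, rfl, rfl, hw⟩ := exists_walk_of_tpow_ne_bot A n i j hbot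
  obtain ⟨a, b, hab, hbn, hwab⟩ : ∃ a b : ℕ, a < b ∧ b ≤ n ∧ w a = w b := by
    obtain ⟨a, b, hne, heq⟩ :=
      Fintype.exists_ne_map_eq_of_card_lt (fun t : Fin (n + 1) => w t) (by simp)
    rcases hne.lt_or_gt with hlt | hlt
    · exact ⟨a, b, hlt, Nat.lt_succ_iff.1 b.isLt, heq⟩
    · exact ⟨b, a, hlt, Nat.lt_succ_iff.1 a.isLt, heq.symm⟩
  have hcycle : ∑ t ∈ Ico a b, A (w t) (w (t + 1)) ≤ 0 := by
    refine (sum_Ico_le_tpow A w hab.le).trans ?_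
    rw [hwab]
    exact tpow_apply_self_nonpos A h (by omega) (by omega) _
  rw [hw, range_eq_Ico, ← sum_Ico_consecutive _ (Nat.zero_le a) (hab.le.trans hbn),
    ← sum_Ico_consecutive _ hab.le hbn]
  calc _ ≤ tpow A a (w 0) (w a) + (0 + tpow A (n - b) (w b) (w n)) := by
        gcongr
        · simpa using sum_Ico_le_tpow A w (Nat.zero_le a)
        · exact sum_Ico_le_tpow A w hbn
    _ ≤ tpow A (a + (n - b)) (w 0) (w n) := by
        rw [zero_add, tpow_add, ← hwab]
        exact le_tSum (fun k => tpow A a (w 0) k + tpow A (n - b) k (w n)) (w a)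
    _ ≤ kstar A (w 0) (w n) := tpow_le_kstar_of_lt A (by omega) _ _

lemma tMulM_kstar_le (h : TrB A ≤ 0) (i j : Fin n) : tMulM A (kstar A) i j ≤ kstar A i j := by
  refine tSum_le_iff.2 fun k => ?_
  rw [kstar, add_tSum, tSum_le_iff]
  intro c
  calc A i k + tpow A c k j ≤ tpow A (c + 1) i j := by
        rw [tpow_succ']; exact le_tSum (fun k => A i k + tpow A c k j) k
    _ ≤ kstar A i j := by
        rcases (show (c : ℕ) + 1 ≤ n from c.isLt).lt_or_eq with hlt | heq
        · exact tpow_le_kstar_of_lt A hlt i j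
        · rw [heq]; exact tpow_dim_le_kstar A h i j

lemma tpow_le_kstar (h : TrB A ≤ 0) (m : ℕ) (i j : Fin n) : tpow A m i j ≤ kstar A i j := by
  induction m generalizing i j with
  | zero => exact tpow_le_kstar_of_lt A i.pos i j
  | succ m ih =>
    rw [tpow_succ']
    exact (tMulM_mono_right A ih i j).trans (tMulM_kstar_le A h i j)

lemma tMulV_tMulV_kstar_le (h : TrB A ≤ 0) (u : Fin n → T) :
    tMulV A (tMulV (kstar A) u) ≤ tMulV (kstar A) u := by
  rw [← tMulV_tMulM]
  exact tMulV_mono_left (tMulM_kstar_le A h) u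

variable {A}

lemma vMv_tpow_le_vMv_kstar {s g : Fin n → T} {k : ℕ} (hk : k < n) :
    vMv s (tpow A k) g ≤ vMv s (kstar A) g := by
  refine vMv_le_iff.2 fun a b => le_trans ?_ (le_vMv s (kstar A) g a b)
  gcongr
  exact tpow_le_kstar_of_lt A hk a b

lemma vMv_kstar_nonpos {s g : Fin n → T} (h : ∀ k < n, vMv s (tpow A k) g ≤ 0) :
    vMv s (kstar A) g ≤ 0 := by
  refine vMv_le_iff.2 fun a b => ?_
  rw [kstar, add_tSum, tSum_add, tSum_le_iff]
  exact fun k => vMv_le_iff.1 (h k k.isLt) a b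

end KleeneStar

lemma mem_pairSet {k : ℕ} {ij : ℕ × ℕ} : ij ∈ pairSet k ↔ ij.1 + ij.2 + 2 ≤ k := by
  simp only [pairSet, mem_filter, mem_product, mem_range, and_iff_right_iff_imp]
  omega

section RankOne

variable {n : ℕ} (R : Matrix (Fin n) (Fin n) T) (p : Fin n → T)

def supRow : Matrix (Fin n) (Fin n) T := fun i j => max (R i j) (p j)

lemma tMulV_supRow (x : Fin n → T) :
    tMulV (supRow R p) x = fun i => max (tMulV R x i) (tDot p x) :=
  tMulV_max R (fun _ j => p j) x

variable {R p}

-- `tSum (tpow R i a) + tVMul p (tpow R j) b` is the `(a, b)` entry of the rank-one matrix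
-- `R^i 1 p R^j`.
lemma tpow_supRow_le (hp : ∀ m c, tVMul p (tpow R m) c ≤ 0) (k : ℕ) (a b : Fin n) :
    tpow (supRow R p) k a b ≤ max (tpow R k a b)
      ((pairSet (k + 1)).sup fun ij => tSum (tpow R ij.1 a) + tVMul p (tpow R ij.2) b) := by
  induction k generalizing b with
  | zero => exact le_max_left _ _
  | succ k ih =>
    have hpair : ∀ i j, i + j < k + 1 →
        tSum (tpow R i a) + tVMul p (tpow R j) b ≤ max (tpow R (k + 1) a b)
          ((pairSet (k + 2)).sup fun ij => tSum (tpow R ij.1 a) + tVMul p (tpow R ij.2) b) :=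
      fun i j hij => le_max_of_le_right <|
        le_sup (f := fun ij => tSum (tpow R ij.1 a) + tVMul p (tpow R ij.2) b)
          (b := (i, j)) (mem_pairSet.2 (by simp only; omega))
    refine tSum_le_iff.2 fun c => (add_le_add_left (ih c) _).trans ?_
    rw [supRow, ← max_add_add_left, ← max_add_add_right, ← max_add_add_right]
    simp only [max_le_iff]
    refine ⟨⟨?_, ?_⟩, ?_, ?_⟩
    · exact le_max_of_le_left (le_tSum (fun c' => tpow R k a c' + R c' b) c)
    · refine sup_add_const_le fun ij hij => ?_
      rw [mem_pairSet] at hij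
      refine le_trans ?_ (hpair ij.1 (ij.2 + 1) (by omega))
      rw [add_assoc, tpow, tVMul_tMulM]
      exact add_le_add_right (le_tSum (fun c' => tVMul p (tpow R ij.2) c' + R c' b) c) _
    · refine le_trans ?_ (hpair k 0 (by omega))
      rw [tpow, tVMul_tId]
      exact add_le_add_left (le_tSum _ c) _
    · refine sup_add_const_le fun ij hij => ?_
      rw [mem_pairSet] at hij
      refine le_trans ?_ (hpair ij.1 0 (by omega))
      rw [add_assoc, tpow, tVMul_tId]
      exact add_le_add_right (add_le_of_nonpos_left (hp ij.2 c)) _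

lemma TrB_supRow_nonpos (hR : TrB R ≤ 0) (hp : ∀ m c, tVMul p (tpow R m) c ≤ 0) :
    TrB (supRow R p) ≤ 0 := by
  refine tSum_le_iff.2 fun k => tSum_le_iff.2 fun a => (tpow_supRow_le hp _ a a).trans ?_
  refine max_le (tpow_apply_self_nonpos R hR (by omega) k.isLt a) (Finset.sup_le fun ij _ => ?_)
  refine (tSum_add_le_tSum_tVMul _ _ a).trans ?_
  rw [← tVMul_tMulM, ← tpow_add]
  exact tSum_le_iff.2 (hp _)

lemma vMv_tpow_supRow_nonpos (hp : ∀ m c, tVMul p (tpow R m) c ≤ 0) {s g : Fin n → T} {k : ℕ}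
    (hR : vMv s (tpow R k) g ≤ 0)
    (hpair : ∀ ij ∈ pairSet (k + 1),
      tSum (tVMul s (tpow R ij.1)) + tDot (tVMul p (tpow R ij.2)) g ≤ 0) :
    vMv s (tpow (supRow R p) k) g ≤ 0 := by
  refine vMv_le_iff.2 fun a b => ?_
  refine (add_le_add_left (add_le_add_right (tpow_supRow_le hp k a b) _) _).trans ?_
  rw [← max_add_add_left, ← max_add_add_right]
  refine max_le (vMv_le_iff.1 hR a b) ?_
  rw [add_right_comm, add_comm]
  refine sup_add_const_le fun ij hij => (le_of_eq (by abel)).trans ((add_le_add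
    (tSum_add_le_tSum_tVMul s _ a) (le_tSum (fun b => tVMul p (tpow R ij.2) b + g b) b)).trans
    (hpair ij hij))

end RankOne

-- The `θ` of the theorem, for `s = s⁻`.
def makespanBound {n : ℕ} (R C : Matrix (Fin n) (Fin n) T) (s g : Fin n → T) : T :=
  max ((pairSet n).sup fun ij =>
      tSum (tVMul s (tpow R ij.1)) + tSum (tMulV (tMulM C (tpow R ij.2)) g))
    (tSum fun a => tSum (tMulM C (kstar R) a))

section Makespan

variable {n : ℕ} {R C : Matrix (Fin n) (Fin n) T} {s g : Fin n → T} {x : Fin n → ℝ}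

lemma tSum_tVMul_tpow_le (hRx : tMulV R (fun i => (x i : T)) ≤ fun i => (x i : T))
    (hs : tDot s (fun i => (x i : T)) ≤ 0) (k : ℕ) :
    tSum (tVMul s (tpow R k)) ≤ tSum fun i => ((-x i : ℝ) : T) := by
  refine tSum_le_iff.2 fun l => tSum_le_iff.2 fun m => ?_
  refine le_trans ?_ (le_tSum (fun i => ((-x i : ℝ) : T)) l)
  rw [← zero_add ((-x l : ℝ) : T), le_add_coe_neg_iff, add_assoc]
  calc s m + (tpow R k m l + x l) ≤ s m + x m :=
        add_le_add_right (tMulV_le_iff.1 (tMulV_tpow_le R hRx k) m l) _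
    _ ≤ 0 := (le_tSum (fun i => s i + x i) m).trans hs

lemma tSum_tMulV_tpow_le {y : Fin n → T} (hRy : tMulV R y ≤ y) (hg : g ≤ y) (k : ℕ) :
    tSum (tMulV (tMulM C (tpow R k)) g) ≤ tSum (tMulV C y) := by
  refine tSum_mono ((tMulV_mono _ hg).trans ?_)
  rw [tMulV_tMulM]
  exact tMulV_mono C (tMulV_tpow_le R hRy k)

lemma tSum_tMulM_kstar_le (hRx : tMulV R (fun i => (x i : T)) ≤ fun i => (x i : T)) :
    (tSum fun a => tSum (tMulM C (kstar R) a)) ≤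
      tSum (tMulV C fun i => (x i : T)) + tSum fun i => ((-x i : ℝ) : T) := by
  refine tSum_le_iff.2 fun a => tSum_le_iff.2 fun b => ?_
  refine le_trans ?_ (add_le_add_right (le_tSum (fun i => ((-x i : ℝ) : T)) b) _)
  rw [le_add_coe_neg_iff]
  calc tMulM C (kstar R) a b + x b ≤ tMulV (tMulM C (kstar R)) (fun i => (x i : T)) a :=
        le_tSum (fun j => tMulM C (kstar R) a j + x j) b
    _ ≤ tMulV C (fun i => (x i : T)) a := by
        rw [tMulV_tMulM]; exact tMulV_mono C (tMulV_kstar_le R hRx) a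
    _ ≤ _ := le_tSum _ a

lemma makespanBound_le (hRx : tMulV R (fun i => (x i : T)) ≤ fun i => (x i : T))
    (hg : g ≤ fun i => (x i : T)) (hs : tDot s (fun i => (x i : T)) ≤ 0) :
    makespanBound R C s g ≤
      tSum (tMulV C fun i => (x i : T)) + tSum fun i => ((-x i : ℝ) : T) := by
  refine max_le (Finset.sup_le fun ij _ => ?_) (tSum_tMulM_kstar_le hRx)
  exact (add_le_add (tSum_tVMul_tpow_le hRx hs ij.1) (tSum_tMulV_tpow_le hRx hg ij.2)).trans_eq
    (add_comm _ _)

lemma tMulM_tpow_le_makespanBound (hR : TrB R ≤ 0) (m : ℕ) (a c : Fin n) :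
    tMulM C (tpow R m) a c ≤ makespanBound R C s g :=
  (tMulM_mono_right C (tpow_le_kstar R hR m) a c).trans <| (le_tSum _ c).trans <|
    (le_tSum (fun a => tSum (tMulM C (kstar R) a)) a).trans (le_max_right _ _)

lemma le_makespanBound_of_mem {ij : ℕ × ℕ} (hij : ij ∈ pairSet n) :
    tSum (tVMul s (tpow R ij.1)) + tSum (tMulV (tMulM C (tpow R ij.2)) g) ≤
      makespanBound R C s g := by
  unfold makespanBound
  exact le_max_of_le_left (le_sup (f := fun ij : ℕ × ℕ =>
    tSum (tVMul s (tpow R ij.1)) + tSum (tMulV (tMulM C (tpow R ij.2)) g)) hij)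

lemma makespanBound_ne_bot (hR : TrB R ≤ 0) (hC : ∀ j, ∃ i, C i j ≠ ⊥) (j : Fin n) :
    makespanBound R C s g ≠ ⊥ := by
  obtain ⟨i, hi⟩ := hC j
  have := tMulM_tpow_le_makespanBound (C := C) (s := s) (g := g) hR 0 i j
  rw [tpow, tMulM_tId] at this
  exact ne_bot_of_le_ne_bot hi this

lemma tVMul_tconj_tpow_nonpos (hR : TrB R ≤ 0) (m : ℕ) (c : Fin n) :
    tVMul (tVMul (fun _ => tconj (makespanBound R C s g)) C) (tpow R m) c ≤ 0 := by
  rw [← tVMul_tMulM]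
  exact tSum_le_iff.2 fun a => tconj_add_nonpos (tMulM_tpow_le_makespanBound hR m a c)

lemma vMv_kstar_supRow_nonpos (hR : TrB R ≤ 0) (hfeas : vMv s (kstar R) g ≤ 0) :
    vMv s (kstar (supRow R (tVMul (fun _ => tconj (makespanBound R C s g)) C))) g ≤ 0 := by
  refine vMv_kstar_nonpos fun k hk => vMv_tpow_supRow_nonpos (tVMul_tconj_tpow_nonpos hR) ?_ ?_
  · exact (vMv_tpow_le_vMv_kstar hk).trans hfeas
  · intro ij hij
    rw [← tVMul_tMulM, tDot_tVMul_const, add_left_comm]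
    refine tconj_add_nonpos (le_makespanBound_of_mem ?_)
    rw [mem_pairSet] at hij ⊢
    omega

lemma exists_feasible_le_makespanBound (hR : TrB R ≤ 0) (hC : ∀ j, ∃ i, C i j ≠ ⊥)
    (hfeas : vMv s (kstar R) g ≤ 0) :
    ∃ x : Fin n → ℝ, tMulV R (fun i => (x i : T)) ≤ (fun i => (x i : T)) ∧
      g ≤ (fun i => (x i : T)) ∧ tDot s (fun i => (x i : T)) ≤ 0 ∧
      tSum (tMulV C fun i => (x i : T)) + tSum (fun i => ((-x i : ℝ) : T)) ≤
        makespanBound R C s g := by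
  set p := tVMul (fun _ => tconj (makespanBound R C s g)) C
  -- The `ε 1` part makes `x` finite, and `s⁻ G* (ε 1) ≤ 0` keeps `s⁻ x ≤ 0`.
  obtain ⟨ε, hε⟩ := exists_add_coe_nonpos (vMv s (kstar (supRow R p)) fun _ => 0)
  set u : Fin n → T := fun l => max (g l) ε
  have hGx := tMulV_tMulV_kstar_le (supRow R p)
    (TrB_supRow_nonpos hR (tVMul_tconj_tpow_nonpos (C := C) (s := s) (g := g) hR)) u
  rw [tMulV_supRow] at hGx
  have hux := le_tMulV_kstar (supRow R p) u
  choose x hx using fun i => WithBot.ne_bot_iff_exists.1 <|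
    ne_bot_of_le_ne_bot WithBot.coe_ne_bot ((le_max_right (g i) ε).trans (hux i))
  have hx' : (fun i => (x i : T)) = tMulV (kstar (supRow R p)) u := funext hx
  refine ⟨x, ?_, ?_, ?_, ?_⟩
  · rw [hx']; exact fun i => (le_max_left _ _).trans (hGx i)
  · rw [hx']; exact fun i => (le_max_left _ _).trans (hux i)
  · rw [hx']
    refine vMv_le_iff.2 fun a b => ?_
    rw [← max_add_add_left]
    refine max_le (vMv_le_iff.1 (vMv_kstar_supRow_nonpos hR hfeas) a b) (le_trans ?_ hε)
    exact add_le_add_left ((add_zero _).symm.trans_le (le_vMv s _ (fun _ => 0) a b)) _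
  · rw [add_tSum]
    refine tSum_le_iff.2 fun i => add_coe_neg_le_of_tconj_add_le (makespanBound_ne_bot hR hC i) ?_
    rw [← tDot_tVMul_const, hx', hx i]
    exact (le_max_right _ _).trans (hGx i)

end Makespan

lemma tDot_sneg_nonpos_iff {n : ℕ} (C : Matrix (Fin n) (Fin n) T) (f h x : Fin n → ℝ) :
    tDot (fun j => max (tSum fun i => ((-(f i) : ℝ) : T) + C i j) ((-(h j) : ℝ) : T))
        (fun i => (x i : T)) ≤ 0 ↔
      tMulV C (fun i => (x i : T)) ≤ (fun i => (f i : T)) ∧ ∀ j, x j ≤ h j := by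
  simp only [tDot, tSum_le_iff, ← max_add_add_right, max_le_iff, forall_and, tSum_add, add_assoc,
    coe_neg_add_nonpos_iff, WithBot.coe_le_coe, tMulV_le_iff]
  rw [forall_comm]

lemma makespan_constraints_iff {n : ℕ} (B D C : Matrix (Fin n) (Fin n) T) (g : Fin n → T)
    (f h x : Fin n → ℝ) :
    ((∀ i, tSum (fun j => B i j + (x j : T)) ≤ (x i : T)) ∧
      (∀ i, tSum (fun j => D i j + tSum fun l => C j l + (x l : T)) ≤ (x i : T)) ∧
      (∀ i, g i ≤ (x i : T)) ∧ (∀ i, x i ≤ h i) ∧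
      (∀ i, tSum (fun j => C i j + (x j : T)) ≤ (f i : T))) ↔
    tMulV (fun i j => max (B i j) (tMulM D C i j)) (fun i => (x i : T)) ≤ (fun i => (x i : T)) ∧
      g ≤ (fun i => (x i : T)) ∧
      tDot (fun j => max (tSum fun i => ((-(f i) : ℝ) : T) + C i j) ((-(h j) : ℝ) : T))
        (fun i => (x i : T)) ≤ 0 := by
  rw [tMulV_max, tMulV_tMulM, tDot_sneg_nonpos_iff]
  simp only [Pi.le_def, max_le_iff, forall_and]
  exact ⟨fun ⟨h1, h2, h3, h4, h5⟩ => ⟨⟨h1, h2⟩, h3, h5, h4⟩,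
    fun ⟨⟨h1, h2⟩, h3, h5, h4⟩ => ⟨h1, h2, h3, h4, h5⟩⟩

/-- Makespan scheduling theorem: the minimum of x⁻ 1 1ᵀ C x over regular x with
Bx ≤ x, D(Cx) ≤ x, g ≤ x ≤ h, Cx ≤ f equals
θ = ⊕_{0≤i+j≤n−2} ‖s⁻R^i‖ ‖C R^j g‖ ⊕ ‖C R*‖, with R = B ⊕ DC, s⁻ = f⁻C ⊕ h⁻. -/
theorem tropical_makespan_scheduling {n : ℕ}
    (B D C : Matrix (Fin n) (Fin n) T) (hC : ∀ j, ∃ i, C i j ≠ ⊥)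
    (g : Fin n → T) (f h : Fin n → ℝ)
    (R : Matrix (Fin n) (Fin n) T)
    (hRdef : R = fun i j => max (B i j) (tMulM D C i j))
    (hTr : TrB R ≤ 0)
    (sneg : Fin n → T)
    (hsdef : sneg = fun j =>
      max (tSum fun i => ((-(f i) : ℝ) : T) + C i j) ((-(h j) : ℝ) : T))
    (hfeas : tSum (fun j => sneg j + tSum fun l => kstar R j l + g l) ≤ 0)
    (θ : T)
    (hθdef : θ = max
      ((pairSet n).sup fun ij =>
        (tSum fun l => tSum fun m => sneg m + tpow R ij.1 m l) +
          (tSum fun a => tSum fun b => tMulM C (tpow R ij.2) a b + g b))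
      (tSum fun a => tSum fun b => tMulM C (kstar R) a b)) :
    IsLeast {v : T | ∃ x : Fin n → ℝ,
      (∀ i, tSum (fun j => B i j + (x j : T)) ≤ (x i : T)) ∧
      (∀ i, tSum (fun j => D i j + tSum fun l => C j l + (x l : T)) ≤ (x i : T)) ∧
      (∀ i, g i ≤ (x i : T)) ∧ (∀ i, x i ≤ h i) ∧
      (∀ i, tSum (fun j => C i j + (x j : T)) ≤ (f i : T)) ∧
      (tSum fun i => tSum fun j => C i j + (x j : T)) +
        (tSum fun i => ((-(x i) : ℝ) : T)) = v} θ := by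
  subst hRdef hsdef hθdef
  refine ⟨?_, ?_⟩
  · obtain ⟨x, hRx, hgx, hsx, hle⟩ := exists_feasible_le_makespanBound hTr hC hfeas
    obtain ⟨h1, h2, h3, h4, h5⟩ := (makespan_constraints_iff B D C g f h x).2 ⟨hRx, hgx, hsx⟩
    exact ⟨x, h1, h2, h3, h4, h5, le_antisymm hle (makespanBound_le hRx hgx hsx)⟩
  · rintro v ⟨x, h1, h2, h3, h4, h5, rfl⟩
    obtain ⟨hRx, hgx, hsx⟩ := (makespan_constraints_iff B D C g f h x).1 ⟨h1, h2, h3, h4, h5⟩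
    exact makespanBound_le hRx hgx hsx
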